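/- arXiv:1410.6324 — 2 statements merged into one kernel-verified Lean document; each statement's English description precedes it below -/
import Mathlib

section
/- The map Hom(F^(β), F^(α)) → Hom_cont(F^α, F^β) sending a linear map f to its dual (adjoint) Hom(f,F) is a bijection between linear maps of direct sums and continuous linear maps of the corresponding products (F given the discrete topology, products the product topology). -/
/-!
Identify `x : β →₀ F` and `y : β → F` through the pairing `∑ᶠ j, x j * y j`, which is
`linearCombination F y x`. Testing the adjoint relation on the basis vectors `single j 1` shows
that it says exactly that `g y j` is the pairing of the column `f (single j 1)` with `y`: the
columns of `f` are the coordinate functionals of `g`. So both directions come down to the fact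
that the continuous functionals on the product `F^α` are precisely the pairings with finitely
supported vectors. This holds because the kernel of such a functional is open, hence contains
every `y` vanishing on some finite set.
-/

open Finsupp

section Pairing

variable {R α β : Type*} [CommSemiring R]

theorem finsum_mul_eq_linearCombination (x : α →₀ R) (y : α → R) :
    ∑ᶠ i, x i * y i = linearCombination R y x := by
  rw [linearCombination_apply, Finsupp.sum, finsum_eq_sum_of_support_subset]
  · exact Finset.sum_congr rfl fun i _ => smul_eq_mul _ _
  · intro i hi
    exact Finsupp.mem_support_iff.mpr (left_ne_zero_of_mul hi)

theorem finsum_mul_adjoint_iff (f : (β →₀ R) →ₗ[R] (α →₀ R)) (g : (α → R) → β → R) :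
    (∀ x y, ∑ᶠ i, f x i * y i = ∑ᶠ j, x j * g y j) ↔
      ∀ y j, g y j = linearCombination R y (f (single j 1)) := by
  simp only [finsum_mul_eq_linearCombination]
  constructor
  · intro h y j
    simpa using (h (single j 1) y).symm
  · intro h x y
    suffices (linearCombination R y).comp f = linearCombination R (g y) from
      LinearMap.congr_fun this x
    ext j
    simp [h]

theorem finsum_mul_adjoint_unique {f f' : (β →₀ R) →ₗ[R] (α →₀ R)} {g : (α → R) → β → R}
    (hf : ∀ x y, ∑ᶠ i, f x i * y i = ∑ᶠ j, x j * g y j)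
    (hf' : ∀ x y, ∑ᶠ i, f' x i * y i = ∑ᶠ j, x j * g y j) : f = f' := by
  classical
  rw [finsum_mul_adjoint_iff] at hf hf'
  ext j i
  simpa [linearCombination_single_index] using
    (hf (Pi.single i 1) j).symm.trans (hf' (Pi.single i 1) j)

theorem continuous_linearCombination_left [TopologicalSpace R] [IsTopologicalSemiring R]
    (e : α →₀ R) : Continuous fun y : α → R => linearCombination R y e := by
  simp only [linearCombination_apply, Finsupp.sum]
  fun_prop

end Pairing

theorem exists_finset_eq_zero_of_continuous {α R M : Type*} [TopologicalSpace R] [Zero R]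
    [TopologicalSpace M] [DiscreteTopology M] [Zero M] {φ : (α → R) → M} (hφ : Continuous φ)
    (h0 : φ 0 = 0) : ∃ S : Finset α, ∀ y : α → R, (∀ i ∈ S, y i = 0) → φ y = 0 := by
  obtain ⟨S, u, hu, hsub⟩ := isOpen_pi_iff.1 ((isOpen_discrete {0}).preimage hφ) 0 h0
  exact ⟨S, fun y hy => hsub fun i hi => by simpa [hy i hi] using (hu i hi).2⟩

theorem exists_flip_bilinearCombination_eq_of_continuous {α R : Type*} [CommRing R]
    [TopologicalSpace R] [DiscreteTopology R] (φ : (α → R) →ₗ[R] R) (hφ : Continuous φ) :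
    ∃ e : α →₀ R, (bilinearCombination R R).flip e = φ := by
  classical
  obtain ⟨S, hS⟩ := exists_finset_eq_zero_of_continuous hφ φ.map_zero
  refine ⟨∑ i ∈ S, single i (φ (Pi.single i 1)), LinearMap.ext fun y => ?_⟩
  have hy : φ (y - ∑ i ∈ S, y i • Pi.single i 1) = 0 := hS _ fun i hi => by
    simp [Pi.single_apply, hi]
  rw [map_sub, sub_eq_zero] at hy
  simp [hy, map_sum, mul_comm]

theorem stmt_13_general (F : Type*) [Field F] [TopologicalSpace F] [DiscreteTopology F]
    (α β : Type*) :
    (∀ f : (β →₀ F) →ₗ[F] (α →₀ F),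
      ∃! g : { g : (α → F) →ₗ[F] (β → F) // Continuous g },
        ∀ (x : β →₀ F) (y : α → F),
          ∑ᶠ i, f x i * y i = ∑ᶠ j, x j * g.1 y j) ∧
    (∀ g : (α → F) →ₗ[F] (β → F), Continuous g →
      ∃! f : (β →₀ F) →ₗ[F] (α →₀ F),
        ∀ (x : β →₀ F) (y : α → F),
          ∑ᶠ i, f x i * y i = ∑ᶠ j, x j * g y j) := by
  refine ⟨fun f => ?_, fun g hg => ?_⟩
  · let g : (α → F) →ₗ[F] (β → F) :=
      LinearMap.pi fun j => (bilinearCombination F F).flip (f (single j 1))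
    have hg : Continuous g :=
      continuous_pi fun j => continuous_linearCombination_left (f (single j 1))
    refine ⟨⟨g, hg⟩, (finsum_mul_adjoint_iff f g).2 fun _ _ => rfl, fun g' hg' => ?_⟩
    exact Subtype.ext <| LinearMap.ext fun y => funext ((finsum_mul_adjoint_iff f g'.1).1 hg' y)
  · choose e he using fun j =>
      exists_flip_bilinearCombination_eq_of_continuous (LinearMap.proj j ∘ₗ g)
        ((continuous_apply j).comp hg)
    have hcol : ∀ y j, g y j = linearCombination F y (linearCombination F e (single j 1)) := by
      intro y j
      simpa using (LinearMap.congr_fun (he j) y).symm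
    have hadj := (finsum_mul_adjoint_iff (linearCombination F e) g).2 hcol
    exact ⟨linearCombination F e, hadj, fun f' hf' => finsum_mul_adjoint_unique hf' hadj⟩

theorem stmt_13 (F : Type*) [Field F] [TopologicalSpace F] [DiscreteTopology F]
    (α β : Type*) [Countable α] [Countable β] :
    (∀ f : (β →₀ F) →ₗ[F] (α →₀ F),
      ∃! g : { g : (α → F) →ₗ[F] (β → F) // Continuous g },
        ∀ (x : β →₀ F) (y : α → F),
          ∑ᶠ i, f x i * y i = ∑ᶠ j, x j * g.1 y j) ∧
    (∀ g : (α → F) →ₗ[F] (β → F), Continuous g →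
      ∃! f : (β →₀ F) →ₗ[F] (α →₀ F),
        ∀ (x : β →₀ F) (y : α → F),
          ∑ᶠ i, f x i * y i = ∑ᶠ j, x j * g y j) :=
  stmt_13_general F α β
end

section
/- Let W be a topological F-vector space (F discrete) that is Hausdorff and complete, and admits a decreasing chain of open subspaces W = V_0 ⊃ V_1 ⊃ ⋯ forming a neighborhood basis of 0 with dim(W/V_n) = n for all n. Then W is isomorphic as a topological vector space to F^ℕ with the product topology. -/
/-!
Choose `e n ∈ V n \ V (n + 1)`, possible because the codimensions of the `V n` strictly
increase. Modulo `V n` the vectors `e 0, …, e (n - 1)` are linearly independent, hence a basis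
of the `n`-dimensional space `W ⧸ V n`. So every `w` has a unique coefficient sequence `a` with
`w - ∑ i < n, a i • e i ∈ V n` for all `n`, and `w ↦ a` is linear. It is injective because
`⋂ n, V n = 0` in a Hausdorff space and surjective by completeness, and `w ∈ V n` exactly when
`a i = 0` for `i < n`: it carries the neighbourhood basis `V n` of `0` onto the standard
neighbourhood basis of `0` in `ℕ → F`, so it is a homeomorphism.
-/

open Filter Topology Finset

section

variable {F W : Type*} [Field F] [AddCommGroup W] [Module F W] {V : ℕ → Submodule F W}
  {e : ℕ → W}

def IsAdaptedSeq (V : ℕ → Submodule F W) (e : ℕ → W) : Prop :=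
  ∀ n, e n ∈ V n ∧ e n ∉ V (n + 1)

def IsExpansion (V : ℕ → Submodule F W) (e : ℕ → W) (w : W) (a : ℕ → F) : Prop :=
  ∀ n, w - ∑ i ∈ range n, a i • e i ∈ V n

theorem exists_isAdaptedSeq (hV : Antitone V) (hdim : ∀ n, Module.rank F (W ⧸ V n) = n) :
    ∃ e, IsAdaptedSeq V e := by
  have hlt : ∀ n, V (n + 1) < V n := fun n =>
    (hV n.le_succ).lt_of_ne fun heq => by
      have h := hdim (n + 1)
      rw [heq, hdim n, Nat.cast_inj] at h
      omega
  choose e he using fun n => SetLike.exists_of_lt (hlt n)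
  exact ⟨e, he⟩

theorem sum_Ico_smul_mem (hV : Antitone V) (he : ∀ n, e n ∈ V n) (a : ℕ → F) (m n : ℕ) :
    ∑ i ∈ Ico m n, a i • e i ∈ V m :=
  sum_mem fun i hi => (V m).smul_mem _ (hV (mem_Ico.1 hi).1 (he i))

theorem sub_sum_mem_of_le (hV : Antitone V) (he : ∀ n, e n ∈ V n) {w : W} {a : ℕ → F}
    {m n : ℕ}
    (h : w - ∑ i ∈ range n, a i • e i ∈ V n) (hmn : m ≤ n) :
    w - ∑ i ∈ range m, a i • e i ∈ V m := by
  convert (V m).add_mem (hV hmn h) (sum_Ico_smul_mem hV he a m n) using 1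
  rw [← sum_range_add_sum_Ico _ hmn]
  abel

theorem exists_isExpansion_of_complete (hV : Antitone V) (he : ∀ n, e n ∈ V n)
    (hcomplete : ∀ x : ∀ n : ℕ, W ⧸ V n,
      (∀ m n : ℕ, (h : m ≤ n) → Submodule.mapQ (V n) (V m) LinearMap.id (hV h) (x n) = x m) →
      ∃ w : W, ∀ n, Submodule.Quotient.mk w = x n)
    (a : ℕ → F) : ∃ w, IsExpansion V e w a := by
  obtain ⟨w, hw⟩ := hcomplete (fun n => Submodule.Quotient.mk (∑ i ∈ range n, a i • e i))
    fun m n hmn => by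
      rw [Submodule.mapQ_apply, LinearMap.id_apply, Submodule.Quotient.eq,
        ← sum_range_add_sum_Ico _ hmn, add_sub_cancel_left]
      exact sum_Ico_smul_mem hV he a m n
  exact ⟨w, fun n => (Submodule.Quotient.eq _).1 (hw n)⟩

namespace IsAdaptedSeq

theorem coeff_eq_zero_of_sum_mem (he : IsAdaptedSeq V e) (hV : Antitone V) {n : ℕ} {a : ℕ → F}
    (h : ∑ i ∈ range n, a i • e i ∈ V n) : ∀ i < n, a i = 0 := by
  intro i
  induction i using Nat.strong_induction_on with
  | _ i ih =>
  intro hi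
  -- the terms below `i` vanish by induction, those above it lie in `V (i + 1)`
  have hsplit : ∑ j ∈ range n, a j • e j = a i • e i + ∑ j ∈ Ico (i + 1) n, a j • e j := by
    rw [← sum_range_add_sum_Ico _ hi, sum_range_succ,
      sum_eq_zero fun j hj => by
        rw [ih j (mem_range.1 hj) ((mem_range.1 hj).trans hi), zero_smul], zero_add]
  have hmem : a i • e i ∈ V (i + 1) := by
    have h' := hV hi h
    rw [hsplit] at h'
    exact (Submodule.add_mem_iff_left _
      (sum_Ico_smul_mem hV (fun k => (he k).1) a _ _)).1 h'
  by_contra ha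
  exact (he i).2 ((Submodule.smul_mem_iff _ ha).1 hmem)

theorem eq_of_sub_sum_mem (he : IsAdaptedSeq V e) (hV : Antitone V) {w : W} {n : ℕ}
    {a b : ℕ → F}
    (ha : w - ∑ i ∈ range n, a i • e i ∈ V n) (hb : w - ∑ i ∈ range n, b i • e i ∈ V n) :
    ∀ i < n, a i = b i := by
  have h := he.coeff_eq_zero_of_sum_mem hV (a := a - b) (by
    convert (V n).sub_mem hb ha using 1
    simp [sub_smul, sum_sub_distrib])
  exact fun i hi => sub_eq_zero.1 (h i hi)

theorem linearIndependent_mkQ (he : IsAdaptedSeq V e) (hV : Antitone V) (n : ℕ) :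
    LinearIndependent F fun i : Fin n => (V n).mkQ (e i) := by
  rw [Fintype.linearIndependent_iff]
  intro g hg i
  have hext : ∀ i : Fin n, Function.extend Fin.val g 0 i = g i :=
    Fin.val_injective.extend_apply g 0
  have hsum : ∑ j ∈ range n, Function.extend Fin.val g 0 j • e j ∈ V n := by
    rw [← Fin.sum_univ_eq_sum_range (fun j => Function.extend Fin.val g 0 j • e j),
      ← Submodule.Quotient.mk_eq_zero, ← Submodule.mkQ_apply, map_sum]
    simpa [hext] using hg
  simpa [hext] using he.coeff_eq_zero_of_sum_mem hV hsum i i.isLt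

theorem exists_sub_sum_mem (he : IsAdaptedSeq V e) (hV : Antitone V) {n : ℕ}
    (hn : Module.rank F (W ⧸ V n) = n) (w : W) :
    ∃ a : ℕ → F, w - ∑ i ∈ range n, a i • e i ∈ V n := by
  have : FiniteDimensional F (W ⧸ V n) := .of_rank_eq_nat hn
  have hspan := (he.linearIndependent_mkQ hV n).span_eq_top_of_card_eq_finrank'
    (by simp [Module.finrank_eq_of_rank_eq hn])
  obtain ⟨g, hg⟩ := (Submodule.mem_span_range_iff_exists_fun F).1
    (hspan ▸ Submodule.mem_top : (V n).mkQ w ∈ _)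
  have hext : ∀ i : Fin n, Function.extend Fin.val g 0 i = g i :=
    Fin.val_injective.extend_apply g 0
  refine ⟨Function.extend Fin.val g 0, ?_⟩
  rw [← Submodule.Quotient.eq, ← Fin.sum_univ_eq_sum_range
    (fun j => Function.extend Fin.val g 0 j • e j)]
  refine hg.symm.trans ?_
  rw [← Submodule.mkQ_apply, map_sum]
  simp [hext]

theorem isExpansion_unique (he : IsAdaptedSeq V e) (hV : Antitone V) {w : W} {a b : ℕ → F}
    (ha : IsExpansion V e w a) (hb : IsExpansion V e w b) : a = b :=
  funext fun i => he.eq_of_sub_sum_mem hV (ha (i + 1)) (hb (i + 1)) i i.lt_succ_self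

theorem exists_isExpansion (he : IsAdaptedSeq V e) (hV : Antitone V)
    (hdim : ∀ n, Module.rank F (W ⧸ V n) = n) (w : W) : ∃ a, IsExpansion V e w a := by
  choose a ha using fun n => he.exists_sub_sum_mem hV (hdim n) w
  -- read the `i`-th coefficient off level `i + 1`; by uniqueness all later levels agree with it
  refine ⟨fun i => a (i + 1) i, fun n => ?_⟩
  have hagree : ∀ i < n, a (i + 1) i = a n i := fun i hi =>
    he.eq_of_sub_sum_mem hV (ha (i + 1))
      (sub_sum_mem_of_le hV (fun k => (he k).1) (ha n) hi) i i.lt_succ_self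
  have hsum : ∑ i ∈ range n, a (i + 1) i • e i = ∑ i ∈ range n, a n i • e i :=
    sum_congr rfl fun i hi => by rw [hagree i (mem_range.1 hi)]
  simpa only [hsum] using ha n

end IsAdaptedSeq

namespace IsExpansion

variable {w w' : W} {a b : ℕ → F}

theorem add (h : IsExpansion V e w a) (h' : IsExpansion V e w' b) :
    IsExpansion V e (w + w') (a + b) := fun n => by
  convert (V n).add_mem (h n) (h' n) using 1
  simp only [Pi.add_apply, add_smul, sum_add_distrib]
  abel

theorem smul (h : IsExpansion V e w a) (c : F) : IsExpansion V e (c • w) (c • a) := fun n => by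
  convert (V n).smul_mem c (h n) using 1
  simp only [Pi.smul_apply, smul_eq_mul, mul_smul, smul_sub, smul_sum]

end IsExpansion

namespace IsAdaptedSeq

variable (he : IsAdaptedSeq V e) (hV : Antitone V) (hdim : ∀ n, Module.rank F (W ⧸ V n) = n)

noncomputable def coeffs : W →ₗ[F] ℕ → F where
  toFun w := (he.exists_isExpansion hV hdim w).choose
  map_add' w w' := he.isExpansion_unique hV (he.exists_isExpansion hV hdim _).choose_spec
    ((he.exists_isExpansion hV hdim w).choose_spec.add
      (he.exists_isExpansion hV hdim w').choose_spec)
  map_smul' c w := he.isExpansion_unique hV (he.exists_isExpansion hV hdim _).choose_spec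
    ((he.exists_isExpansion hV hdim w).choose_spec.smul c)

theorem isExpansion_coeffs (w : W) : IsExpansion V e w (he.coeffs hV hdim w) :=
  (he.exists_isExpansion hV hdim w).choose_spec

theorem coeffs_eq_of_isExpansion {w : W} {a : ℕ → F} (h : IsExpansion V e w a) :
    he.coeffs hV hdim w = a :=
  he.isExpansion_unique hV (he.isExpansion_coeffs hV hdim w) h

theorem mem_iff_coeffs_eq_zero (n : ℕ) (w : W) :
    w ∈ V n ↔ ∀ i < n, he.coeffs hV hdim w i = 0 := by
  refine ⟨fun hw => he.eq_of_sub_sum_mem hV (he.isExpansion_coeffs hV hdim w n) (b := 0)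
    (by simpa using hw), fun h => ?_⟩
  have hsum : ∑ i ∈ range n, he.coeffs hV hdim w i • e i = 0 :=
    sum_eq_zero fun i hi => by rw [h i (mem_range.1 hi), zero_smul]
  simpa [hsum] using he.isExpansion_coeffs hV hdim w n

end IsAdaptedSeq

section Topology

variable [TopologicalSpace W]

theorem eq_zero_of_forall_mem [T1Space W]
    (hV : (𝓝 0).HasBasis (fun _ : ℕ => True) fun n => (V n : Set W)) {w : W}
    (h : ∀ n, w ∈ V n) : w = 0 := by
  by_contra hw
  obtain ⟨n, -, hn⟩ := hV.mem_iff.1 (isOpen_compl_singleton.mem_nhds (Ne.symm hw))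
  exact hn (h n) rfl

variable [TopologicalSpace F] [DiscreteTopology F] [IsTopologicalAddGroup W]

theorem continuous_of_forall_mem_iff {L : W →ₗ[F] ℕ → F} (hV : ∀ n, (V n : Set W) ∈ 𝓝 0)
    (hL : ∀ n w, w ∈ V n ↔ ∀ i < n, L w i = 0) : Continuous L := by
  refine continuous_of_continuousAt_zero L (tendsto_pi_nhds.2 fun i => ?_)
  rw [map_zero, Pi.zero_apply, nhds_discrete F, tendsto_pure]
  filter_upwards [hV (i + 1)] with w hw using (hL _ w).1 hw i i.lt_succ_self

theorem continuous_symm_of_forall_mem_iff {E : W ≃ₗ[F] ℕ → F}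
    (hV : (𝓝 0).HasBasis (fun _ : ℕ => True) fun n => (V n : Set W))
    (hE : ∀ n w, w ∈ V n ↔ ∀ i < n, E w i = 0) : Continuous E.symm := by
  refine continuous_of_continuousAt_zero E.symm ?_
  rw [ContinuousAt, map_zero, hV.tendsto_right_iff]
  intro n _
  filter_upwards [set_pi_mem_nhds (Set.finite_Iio n) fun i _ =>
    (isOpen_discrete ({0} : Set F)).mem_nhds rfl] with a ha
  exact (hE n _).2 fun i hi => by simpa using ha i hi

end Topology

end

theorem stmt_18_general (F : Type*) [Field F] [TopologicalSpace F] [DiscreteTopology F]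
    (W : Type*) [AddCommGroup W] [Module F W] [TopologicalSpace W]
    [IsTopologicalAddGroup W] [T2Space W]
    (V : ℕ → Submodule F W)
    (hanti : ∀ m n : ℕ, m ≤ n → V n ≤ V m)
    (hbasis : (nhds (0 : W)).HasBasis (fun _ : ℕ => True) (fun n => (V n : Set W)))
    (hdim : ∀ n, Module.rank F (W ⧸ V n) = n)
    (hcomplete : ∀ x : ∀ n : ℕ, W ⧸ V n,
      (∀ m n : ℕ, (h : m ≤ n) →
        Submodule.mapQ (V n) (V m) LinearMap.id (hanti m n h) (x n) = x m) →
      ∃ w : W, ∀ n, Submodule.Quotient.mk w = x n) :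
    ∃ e : W ≃ₗ[F] (ℕ → F), Continuous e ∧ Continuous e.symm := by
  obtain ⟨e, he⟩ := exists_isAdaptedSeq hanti hdim
  have hmem := he.mem_iff_coeffs_eq_zero hanti hdim
  have hinj : Function.Injective (he.coeffs hanti hdim) :=
    (injective_iff_map_eq_zero _).2 fun w hw =>
      eq_zero_of_forall_mem hbasis fun n => (hmem n w).2 fun i _ => by simp [hw]
  have hsurj : Function.Surjective (he.coeffs hanti hdim) := fun a =>
    let ⟨w, hw⟩ := exists_isExpansion_of_complete hanti (fun n => (he n).1) hcomplete a
    ⟨w, he.coeffs_eq_of_isExpansion hanti hdim hw⟩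
  exact ⟨.ofBijective _ ⟨hinj, hsurj⟩,
    continuous_of_forall_mem_iff (fun n => hbasis.mem_of_mem trivial) hmem,
    continuous_symm_of_forall_mem_iff hbasis hmem⟩

theorem stmt_18 (F : Type*) [Field F] [TopologicalSpace F] [DiscreteTopology F]
    (W : Type*) [AddCommGroup W] [Module F W] [TopologicalSpace W]
    [IsTopologicalAddGroup W] [ContinuousSMul F W] [T2Space W]
    (V : ℕ → Submodule F W)
    (hV0 : V 0 = ⊤)
    (hanti : ∀ m n : ℕ, m ≤ n → V n ≤ V m)
    (hopen : ∀ n, IsOpen (V n : Set W))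
    (hbasis : (nhds (0 : W)).HasBasis (fun _ : ℕ => True) (fun n => (V n : Set W)))
    (hdim : ∀ n, Module.rank F (W ⧸ V n) = n)
    (hcomplete : ∀ x : ∀ n : ℕ, W ⧸ V n,
      (∀ m n : ℕ, (h : m ≤ n) →
        Submodule.mapQ (V n) (V m) LinearMap.id (hanti m n h) (x n) = x m) →
      ∃ w : W, ∀ n, Submodule.Quotient.mk w = x n) :
    ∃ e : W ≃ₗ[F] (ℕ → F), Continuous e ∧ Continuous e.symm :=
  stmt_18_general F W V hanti hbasis hdim hcomplete
end
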